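/- arXiv:1409.3558 — 2 statements merged into one kernel-verified Lean document; each statement's English description precedes it below -/
import Mathlib

section
/- Let a continuous-time query algorithm of duration T be given as in the context. Fix a Hermitian 𝕏×𝕏 matrix Γ and a unit vector v ∈ ℂ^𝕏, and define the progress function W(t) = Σ_{x,y∈𝕏} v_x \overline{v_y} Γ_{y,x} ⟨φ_y(t)|φ_x(t)⟩. Then W is differentiable on [0,T] and |dW/dt(t)| ≤ 2·max_{j∈{1,…,n}} ‖Γ∘Δ_j‖ for every t ∈ [0,T]. -/
/-!
Schrödinger's equation gives `dW/dt = i α(t) ∑ v_x conj(v_y) Γ_{yx} ⟨φ_y, (H_Q(y) - H_Q(x)) φ_x⟩`: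
the driving Hamiltonian cancels because it is Hermitian and the same for every input.
`H_Q(y) - H_Q(x)` is block diagonal, with blocks indexed by `(j, w)`, and vanishes on the blocks
with `x_j = y_j`, so on block `(j, w)` the matrix `Γ` may be replaced by `Γ ∘ Δ_j`. With `ψ_x` the
block of `v_x φ_x`, the contribution of the block is
`∑ (Γ ∘ Δ_j)_{yx} (⟨h(y_j) ψ_y, ψ_x⟩ - ⟨ψ_y, h(x_j) ψ_x⟩)`, and Cauchy–Schwarz bounds each of the
two sums by `‖Γ ∘ Δ_j‖ ∑_x ‖ψ_x‖²` because `‖h‖ ≤ 1`. Over all blocks these `∑_x ‖ψ_x‖²` add up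
to `∑_x |v_x|² = 1`.
-/

open scoped Matrix ComplexConjugate

/-- The operator (spectral) norm of a complex matrix. -/
noncomputable def matOpNorm {m : Type*} [Fintype m] [DecidableEq m]
    (M : Matrix m m ℂ) : ℝ :=
  ‖Matrix.toEuclideanCLM (𝕜 := ℂ) M‖

/-- The adversary constraint matrix `Δ_j`, with entries `(Δ_j)_{x,y} = 1 - δ_{x_j,y_j}`. -/
def Delta {X Al : Type*} [DecidableEq Al] {n : ℕ} (inp : X → Fin n → Al) (j : Fin n) :
    Matrix X X ℂ :=
  fun x y => if inp x j = inp y j then 0 else 1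

/-- The oracle Hamiltonian `H_Q(x) = ∑_j |j⟩⟨j| ⊗ h(x_j) ⊗ I_W` as a matrix on
`ℂ^n ⊗ ℂ^{Σ∪{0̄}} ⊗ H_W`, where the blank symbol `0̄` is `Option.none`. -/
def oracleHam {X Al W : Type*} {n : ℕ} [DecidableEq Al] [DecidableEq W]
    (inp : X → Fin n → Al) (h : Al → Matrix (Option Al) (Option Al) ℂ) (x : X) :
    Matrix (Fin n × Option Al × W) (Fin n × Option Al × W) ℂ :=
  fun p q =>
    if p.1 = q.1 ∧ p.2.2 = q.2.2 then h (inp x p.1) p.2.1 q.2.1 else 0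

open Finset

section MatrixBounds

variable {m ι : Type*} [Fintype m] [DecidableEq m] [Fintype ι]

theorem norm_sum_sum_mul_inner_le (M : Matrix m m ℂ) (u w : m → EuclideanSpace ℂ ι) :
    ‖∑ y, ∑ x, M y x * inner ℂ (u y) (w x)‖
      ≤ matOpNorm M * (√(∑ y, ‖u y‖ ^ 2) * √(∑ x, ‖w x‖ ^ 2)) := by
  let c : ι → EuclideanSpace ℂ m := fun k => WithLp.toLp 2 fun y => u y k
  let d : ι → EuclideanSpace ℂ m := fun k => WithLp.toLp 2 fun x => w x k
  have hcd : ∑ y, ∑ x, M y x * inner ℂ (u y) (w x)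
      = ∑ k, inner ℂ (c k) (Matrix.toEuclideanCLM (𝕜 := ℂ) M (d k)) := by
    simp only [PiLp.inner_apply, RCLike.inner_apply, Matrix.ofLp_toEuclideanCLM,
      Matrix.mulVec, dotProduct, mul_sum, sum_mul, c, d]
    symm
    rw [sum_comm]
    refine sum_congr rfl fun y _ => ?_
    rw [sum_comm]
    exact sum_congr rfl fun k _ => sum_congr rfl fun x _ => by ring
  have hc : ∑ k, ‖c k‖ ^ 2 = ∑ y, ‖u y‖ ^ 2 := by
    simp only [PiLp.norm_sq_eq_of_L2, c]; exact sum_comm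
  have hd : ∑ k, ‖d k‖ ^ 2 = ∑ x, ‖w x‖ ^ 2 := by
    simp only [PiLp.norm_sq_eq_of_L2, d]; exact sum_comm
  calc ‖∑ y, ∑ x, M y x * inner ℂ (u y) (w x)‖
      ≤ ∑ k, ‖c k‖ * (matOpNorm M * ‖d k‖) := by
        rw [hcd]
        refine (norm_sum_le _ _).trans (sum_le_sum fun k _ => ?_)
        exact (norm_inner_le_norm _ _).trans <| mul_le_mul_of_nonneg_left
          ((Matrix.toEuclideanCLM (𝕜 := ℂ) M).le_opNorm _) (norm_nonneg _)
    _ = matOpNorm M * ∑ k, ‖c k‖ * ‖d k‖ := by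
        rw [mul_sum]; exact sum_congr rfl fun k _ => by ring
    _ ≤ matOpNorm M * (√(∑ y, ‖u y‖ ^ 2) * √(∑ x, ‖w x‖ ^ 2)) := by
        rw [← hc, ← hd]
        exact mul_le_mul_of_nonneg_left (Real.sum_mul_le_sqrt_mul_sqrt _ _ _) (norm_nonneg _)

theorem norm_sum_sum_mul_inner_sub_le (M : Matrix m m ℂ)
    (K : m → EuclideanSpace ℂ ι →L[ℂ] EuclideanSpace ℂ ι)
    (hK : ∀ x, IsSelfAdjoint (K x)) (hK1 : ∀ x, ‖K x‖ ≤ 1) (ψ : m → EuclideanSpace ℂ ι) :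
    ‖∑ y, ∑ x, M y x * inner ℂ (ψ y) ((K y - K x) (ψ x))‖
      ≤ 2 * matOpNorm M * ∑ x, ‖ψ x‖ ^ 2 := by
  set B := ∑ x, ‖ψ x‖ ^ 2
  have hKψ : √(∑ x, ‖K x (ψ x)‖ ^ 2) ≤ √B := by
    refine Real.sqrt_le_sqrt (sum_le_sum fun x _ => pow_le_pow_left₀ (norm_nonneg _) ?_ 2)
    exact ((K x).le_opNorm _).trans (mul_le_of_le_one_left (norm_nonneg _) (hK1 x))
  have hsplit : ∑ y, ∑ x, M y x * inner ℂ (ψ y) ((K y - K x) (ψ x))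
      = ∑ y, ∑ x, M y x * inner ℂ (K y (ψ y)) (ψ x)
        - ∑ y, ∑ x, M y x * inner ℂ (ψ y) (K x (ψ x)) := by
    simp only [← sum_sub_distrib, ← mul_sub, sub_apply, inner_sub_right]
    refine sum_congr rfl fun y _ => sum_congr rfl fun x _ => ?_
    rw [show inner ℂ (K y (ψ y)) (ψ x) = inner ℂ (ψ y) (K y (ψ x)) from (hK y).isSymmetric _ _]
  have hM : 0 ≤ matOpNorm M := norm_nonneg _
  calc _ ≤ matOpNorm M * (√(∑ x, ‖K x (ψ x)‖ ^ 2) * √B)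
        + matOpNorm M * (√B * √(∑ x, ‖K x (ψ x)‖ ^ 2)) := by
        rw [hsplit]
        exact (norm_sub_le _ _).trans (add_le_add (norm_sum_sum_mul_inner_le _ _ _)
          (norm_sum_sum_mul_inner_le _ _ _))
    _ ≤ matOpNorm M * (√B * √B) + matOpNorm M * (√B * √B) := by gcongr
    _ = 2 * matOpNorm M * B := by
        rw [Real.mul_self_sqrt (sum_nonneg fun _ _ => sq_nonneg _)]; ring

end MatrixBounds

theorem hasDerivWithinAt_inner_of_schrodinger {E : Type*} [NormedAddCommGroup E]
    [InnerProductSpace ℂ E] [CompleteSpace E] {f g : ℝ → E} {A B : E →L[ℂ] E}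
    (hA : IsSelfAdjoint A) {s : Set ℝ} {t : ℝ}
    (hf : HasDerivWithinAt f (-Complex.I • A (f t)) s t)
    (hg : HasDerivWithinAt g (-Complex.I • B (g t)) s t) :
    HasDerivWithinAt (fun r => inner ℂ (f r) (g r))
      (Complex.I * inner ℂ (f t) ((A - B) (g t))) s t := by
  refine (hf.inner ℂ hg).congr_deriv ?_
  rw [inner_smul_right, inner_smul_left,
    show inner ℂ (A (f t)) (g t) = inner ℂ (f t) (A (g t)) from hA.isSymmetric _ _,
    sub_apply, inner_sub_right, map_neg, Complex.conj_I]
  ring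

section Oracle

variable {Al W X : Type*} [Fintype Al] [DecidableEq Al] [Fintype W] [DecidableEq W] {n : ℕ}
  (inp : X → Fin n → Al) (h : Al → Matrix (Option Al) (Option Al) ℂ)

def oracleBlock (b : Fin n × W) (ψ : EuclideanSpace ℂ (Fin n × Option Al × W)) :
    EuclideanSpace ℂ (Option Al) :=
  WithLp.toLp 2 fun a => ψ (b.1, a, b.2)

omit [DecidableEq Al] [DecidableEq W] in
theorem sum_norm_oracleBlock_sq (ψ : EuclideanSpace ℂ (Fin n × Option Al × W)) :
    ∑ b, ‖oracleBlock b ψ‖ ^ 2 = ‖ψ‖ ^ 2 := by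
  simp only [PiLp.norm_sq_eq_of_L2, Fintype.sum_prod_type, oracleBlock]
  exact sum_congr rfl fun j _ => sum_comm

omit [Fintype Al] [Fintype W] in
theorem oracleHam_isHermitian (hherm : ∀ a, (h a).IsHermitian) (x : X) :
    (oracleHam (W := W) inp h x).IsHermitian := by
  refine Matrix.IsHermitian.ext fun p q => ?_
  simp only [oracleHam]
  by_cases hpq : q.1 = p.1 ∧ q.2.2 = p.2.2
  · rw [if_pos hpq, if_pos ⟨hpq.1.symm, hpq.2.symm⟩, hpq.1]
    exact (hherm _).apply _ _
  · rw [if_neg hpq, if_neg fun hqp => hpq ⟨hqp.1.symm, hqp.2.symm⟩, star_zero]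

theorem inner_toEuclideanCLM_oracleHam (x : X) (ψ χ : EuclideanSpace ℂ (Fin n × Option Al × W)) :
    inner ℂ ψ (Matrix.toEuclideanCLM (𝕜 := ℂ) (oracleHam inp h x) χ)
      = ∑ b, inner ℂ (oracleBlock b ψ)
          (Matrix.toEuclideanCLM (𝕜 := ℂ) (h (inp x b.1)) (oracleBlock b χ)) := by
  simp only [PiLp.inner_apply, RCLike.inner_apply, Matrix.ofLp_toEuclideanCLM,
    Matrix.mulVec, dotProduct, Fintype.sum_prod_type, oracleHam, oracleBlock, ite_and, ite_mul,
    zero_mul, sum_ite_irrel, sum_const_zero, sum_ite_eq, mem_univ, if_true]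
  exact sum_congr rfl fun j _ => sum_comm

end Oracle

theorem hadamard_Delta_apply_mul {Al X : Type*} [DecidableEq Al] {n : ℕ}
    (inp : X → Fin n → Al) (Γ : Matrix X X ℂ) {j : Fin n} {x y : X} {d : ℂ}
    (hd : inp x j = inp y j → d = 0) :
    (Γ ⊙ Delta inp j) x y * d = Γ x y * d := by
  by_cases hxy : inp x j = inp y j <;> simp [Matrix.hadamard_apply, Delta, hxy, hd]

section Progress

variable {Al W X : Type*} [Fintype Al] [DecidableEq Al] [Fintype W] [DecidableEq W] {n : ℕ}
  [Fintype X] (inp : X → Fin n → Al) (h : Al → Matrix (Option Al) (Option Al) ℂ)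

noncomputable def progressRate (Γ : Matrix X X ℂ) (v : X → ℂ)
    (φ : X → EuclideanSpace ℂ (Fin n × Option Al × W)) : ℂ :=
  ∑ b : Fin n × W, ∑ y, ∑ x, (Γ ⊙ Delta inp b.1) y x *
    inner ℂ (v y • oracleBlock b (φ y))
      ((Matrix.toEuclideanCLM (𝕜 := ℂ) (h (inp y b.1))
        - Matrix.toEuclideanCLM (𝕜 := ℂ) (h (inp x b.1))) (v x • oracleBlock b (φ x)))

theorem hasDerivWithinAt_progress (hherm : ∀ a, (h a).IsHermitian)
    {D : Matrix (Fin n × Option Al × W) (Fin n × Option Al × W) ℂ} (hD : D.IsHermitian)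
    (a : ℝ) (φ : X → ℝ → EuclideanSpace ℂ (Fin n × Option Al × W)) {s : Set ℝ} {t : ℝ}
    (hφ : ∀ x, HasDerivWithinAt (φ x)
      (-Complex.I • Matrix.toEuclideanCLM (𝕜 := ℂ) (D + (a : ℂ) • oracleHam inp h x) (φ x t)) s t)
    (Γ : Matrix X X ℂ) (v : X → ℂ) :
    HasDerivWithinAt (fun r => ∑ x, ∑ y, v x * conj (v y) * Γ y x * inner ℂ (φ y r) (φ x r))
      (Complex.I * a * progressRate inp h Γ v fun x => φ x t) s t := by
  let H x := Matrix.toEuclideanCLM (𝕜 := ℂ) (D + (a : ℂ) • oracleHam inp h x)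
  have hH x : IsSelfAdjoint (H x) :=
    (hD.add ((oracleHam_isHermitian inp h hherm x).smul (Complex.conj_ofReal a))).isSelfAdjoint.map
      _
  refine (HasDerivWithinAt.fun_sum fun x _ => HasDerivWithinAt.fun_sum fun y _ =>
    (hasDerivWithinAt_inner_of_schrodinger (hH y) (hφ y) (hφ x)).const_mul
      (v x * conj (v y) * Γ y x)).congr_deriv ?_
  have hterm x y :
      v x * conj (v y) * Γ y x * (Complex.I * inner ℂ (φ y t) ((H y - H x) (φ x t)))
      = Complex.I * a * ∑ b : Fin n × W, (Γ ⊙ Delta inp b.1) y x *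
        inner ℂ (v y • oracleBlock b (φ y t))
          ((Matrix.toEuclideanCLM (𝕜 := ℂ) (h (inp y b.1))
            - Matrix.toEuclideanCLM (𝕜 := ℂ) (h (inp x b.1))) (v x • oracleBlock b (φ x t))) := by
    simp only [H, map_add, map_smul, add_sub_add_left_eq_sub, ← smul_sub, smul_apply, sub_apply,
      inner_smul_right, inner_sub_right, inner_toEuclideanCLM_oracleHam, ← sum_sub_distrib, mul_sum]
    refine sum_congr rfl fun b _ => ?_
    rw [hadamard_Delta_apply_mul inp Γ fun hyx => by rw [hyx, sub_self, mul_zero],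
      inner_smul_left, inner_smul_left]
    ring
  calc _ = ∑ x, ∑ y, Complex.I * a * ∑ b : Fin n × W, _ :=
        sum_congr rfl fun x _ => sum_congr rfl fun y _ => hterm x y
    _ = Complex.I * a * progressRate inp h Γ v fun x => φ x t := by
        simp only [← mul_sum, progressRate]
        congr 1
        calc _ = _ := sum_congr rfl fun x _ => sum_comm
          _ = _ := sum_comm
          _ = _ := sum_congr rfl fun b _ => sum_comm

omit [DecidableEq W] in
theorem norm_progressRate_le [DecidableEq X] (hherm : ∀ a, (h a).IsHermitian)
    (hbound : ∀ a, matOpNorm (h a) ≤ 1)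
    (Γ : Matrix X X ℂ) {v : X → ℂ} (hv : ∑ x, ‖v x‖ ^ 2 = 1)
    {φ : X → EuclideanSpace ℂ (Fin n × Option Al × W)} (hφ : ∀ x, ‖φ x‖ = 1) :
    ‖progressRate inp h Γ v φ‖ ≤ 2 * ⨆ j, matOpNorm (Γ ⊙ Delta inp j) := by
  have hψ : ∑ b : Fin n × W, ∑ x, ‖v x • oracleBlock b (φ x)‖ ^ 2 = 1 := by
    rw [sum_comm]
    simp only [norm_smul, mul_pow, ← mul_sum, sum_norm_oracleBlock_sq, hφ, one_pow, mul_one, hv]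
  have hM j : matOpNorm (Γ ⊙ Delta inp j) ≤ ⨆ j, matOpNorm (Γ ⊙ Delta inp j) :=
    le_ciSup (f := fun j => matOpNorm (Γ ⊙ Delta inp j)) (Set.finite_range _).bddAbove j
  calc ‖progressRate inp h Γ v φ‖
      ≤ ∑ b : Fin n × W, 2 * matOpNorm (Γ ⊙ Delta inp b.1) *
          ∑ x, ‖v x • oracleBlock b (φ x)‖ ^ 2 :=
        (norm_sum_le _ _).trans <| sum_le_sum fun b _ => norm_sum_sum_mul_inner_sub_le _ _
          (fun x => (hherm _).isSelfAdjoint.map _) (fun x => hbound _) _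
    _ ≤ ∑ b : Fin n × W, 2 * (⨆ j, matOpNorm (Γ ⊙ Delta inp j)) *
          ∑ x, ‖v x • oracleBlock b (φ x)‖ ^ 2 := by
        gcongr with b; exact hM b.1
    _ = 2 * ⨆ j, matOpNorm (Γ ⊙ Delta inp j) := by rw [← mul_sum, hψ, mul_one]

end Progress

theorem stmt1_general
    {Al W : Type*} [Fintype Al] [DecidableEq Al] [Fintype W] [DecidableEq W]
    {n : ℕ}
    {X : Type*} [Fintype X] [DecidableEq X] (inp : X → Fin n → Al)
    (T : ℝ)
    (h : Al → Matrix (Option Al) (Option Al) ℂ)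
    (hherm : ∀ y, (h y).IsHermitian) (hbound : ∀ y, matOpNorm (h y) ≤ 1)
    (HD : ℝ → Matrix (Fin n × Option Al × W) (Fin n × Option Al × W) ℂ)
    (hHDherm : ∀ t, (HD t).IsHermitian)
    (α : ℝ → ℝ) (hα : ∀ t ∈ Set.Icc 0 T, |α t| ≤ 1)
    (φ : X → ℝ → EuclideanSpace ℂ (Fin n × Option Al × W))
    (hunit : ∀ x, ∀ t ∈ Set.Icc 0 T, ‖φ x t‖ = 1)
    (hschro : ∀ x, ∀ t ∈ Set.Icc 0 T,
      HasDerivWithinAt (φ x)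
        ((-Complex.I) •
          (Matrix.toEuclideanCLM (𝕜 := ℂ)
            (HD t + (α t : ℂ) • oracleHam inp h x) (φ x t)))
        (Set.Icc 0 T) t)
    (Γ : Matrix X X ℂ)
    (v : X → ℂ) (hv : ∑ x, ‖v x‖ ^ 2 = 1) :
    ∀ t ∈ Set.Icc 0 T, ∃ W' : ℂ,
      HasDerivWithinAt
        (fun r => ∑ x, ∑ y, v x * conj (v y) * Γ y x * (inner ℂ (φ y r) (φ x r) : ℂ))
        W' (Set.Icc 0 T) t ∧
      ‖W'‖ ≤ 2 * ⨆ j : Fin n, matOpNorm (Γ ⊙ Delta inp j) := by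
  intro t ht
  refine ⟨Complex.I * α t * progressRate inp h Γ v fun x => φ x t,
    hasDerivWithinAt_progress inp h hherm (hHDherm t) (α t) φ (fun x => hschro x t ht) Γ v, ?_⟩
  calc ‖Complex.I * α t * progressRate inp h Γ v fun x => φ x t‖
      = |α t| * ‖progressRate inp h Γ v fun x => φ x t‖ := by
        rw [norm_mul, norm_mul, Complex.norm_I, one_mul, Complex.norm_real, Real.norm_eq_abs]
    _ ≤ ‖progressRate inp h Γ v fun x => φ x t‖ := mul_le_of_le_one_left (norm_nonneg _) (hα t ht)
    _ ≤ 2 * ⨆ j : Fin n, matOpNorm (Γ ⊙ Delta inp j) :=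
        norm_progressRate_le inp h hherm hbound Γ hv fun x => hunit x t ht

/-- for any continuous-time query algorithm of duration `T`, any Hermitian
matrix `Γ` and any unit vector `v`, the progress function
`W(t) = ∑_{x,y} v_x conj(v_y) Γ_{y,x} ⟨φ_y(t)|φ_x(t)⟩` is differentiable on `[0,T]`
with `|dW/dt(t)| ≤ 2 maxⱼ ‖Γ ∘ Δⱼ‖`. -/
theorem stmt1
    {Al W : Type*} [Fintype Al] [DecidableEq Al] [Fintype W] [DecidableEq W]
    {n : ℕ} (hn : 0 < n)
    {X : Type*} [Fintype X] [DecidableEq X] (inp : X → Fin n → Al)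
    (T : ℝ) (hT : 0 ≤ T)
    (h : Al → Matrix (Option Al) (Option Al) ℂ)
    (hherm : ∀ y, (h y).IsHermitian) (hbound : ∀ y, matOpNorm (h y) ≤ 1)
    (HD : ℝ → Matrix (Fin n × Option Al × W) (Fin n × Option Al × W) ℂ)
    (hHDherm : ∀ t, (HD t).IsHermitian)
    (hHDcont : ∀ p q, Continuous fun t => HD t p q)
    (α : ℝ → ℝ) (hαcont : Continuous α) (hα : ∀ t ∈ Set.Icc 0 T, |α t| ≤ 1)
    (φ : X → ℝ → EuclideanSpace ℂ (Fin n × Option Al × W))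
    (hunit : ∀ x, ∀ t ∈ Set.Icc 0 T, ‖φ x t‖ = 1)
    (hschro : ∀ x, ∀ t ∈ Set.Icc 0 T,
      HasDerivWithinAt (φ x)
        ((-Complex.I) •
          (Matrix.toEuclideanCLM (𝕜 := ℂ)
            (HD t + (α t : ℂ) • oracleHam inp h x) (φ x t)))
        (Set.Icc 0 T) t)
    (Γ : Matrix X X ℂ) (hΓ : Γ.IsHermitian)
    (v : X → ℂ) (hv : ∑ x, ‖v x‖ ^ 2 = 1) :
    ∀ t ∈ Set.Icc 0 T, ∃ W' : ℂ,
      HasDerivWithinAt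
        (fun r => ∑ x, ∑ y, v x * conj (v y) * Γ y x * (inner ℂ (φ y r) (φ x r) : ℂ))
        W' (Set.Icc 0 T) t ∧
      ‖W'‖ ≤ 2 * ⨆ j : Fin n, matOpNorm (Γ ⊙ Delta inp j) :=
  stmt1_general inp T h hherm hbound HD hHDherm α hα φ hunit hschro Γ v hv
end

section
/- Let (H(s), P(s), τ) be an adiabatic process as in the context and let Ω(s) = U_τ(s)*·U_A(s). Then for all s ∈ [0,1], Ω̇(s)·P(0) = U_τ(s)*·Ṗ(s)·U_A(s)·P(0). -/
/-!
Differentiating `P² = P` gives `P Ṗ + Ṗ P = Ṗ`, hence `P Ṗ P = 0`, and so the generator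
`A = -iτ H_A = -iτλ + [Ṗ, P]` of `U_A` satisfies `[A, P] = Ṗ`. Consequently `U_A(s) P(0)` and
`P(s) U_A(s)` solve the same linear equation `X' = A X` with the same initial value, so they
coincide (adiabatic intertwining). Finally `Ω̇ = U_τ* (iτ H + A) U_A`, and on the range of `P(s)`
the eigenvalue terms `iτλ` and `-iτλ` cancel, leaving `(iτ H + A) P = Ṗ P`.
-/

open Set ContinuousLinearMap

def commutatorCLM {H : Type*} [NormedAddCommGroup H] [InnerProductSpace ℂ H]
    (A B : H →L[ℂ] H) : H →L[ℂ] H :=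
  A.comp B - B.comp A

theorem smul_smul_one_add_smul_commutatorCLM {H : Type*} [NormedAddCommGroup H]
    [InnerProductSpace ℂ H] {τ : ℂ} (hτ : τ ≠ 0) (ℓ : ℂ) (Q P : H →L[ℂ] H) :
    (-Complex.I * τ) • (ℓ • (1 : H →L[ℂ] H) + (Complex.I / τ) • commutatorCLM Q P) =
      (-Complex.I * τ * ℓ) • 1 + (Q * P - P * Q) := by
  have hscalar : -Complex.I * τ * (Complex.I / τ) = 1 := by
    field_simp
    rw [Complex.I_sq, neg_neg]
  rw [smul_add, smul_smul, smul_smul, hscalar, one_smul, commutatorCLM, mul_def, mul_def]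

section IdempotentAlgebra

variable {𝕜 R : Type*} [CommSemiring 𝕜] [Ring R] [Algebra 𝕜 R] {p q : R}

theorem IsIdempotentElem.mul_mul_eq_zero_of_mul_add_mul_eq (hp : IsIdempotentElem p)
    (hq : p * q + q * p = q) : p * q * p = 0 := by
  have h : p * (p * q + q * p) * p = p * q * p := by rw [hq]
  rwa [mul_add, add_mul, ← mul_assoc p p q, hp.eq, ← mul_assoc p q p, mul_assoc (p * q) p p,
    hp.eq, add_eq_left] at h

theorem IsIdempotentElem.smul_one_add_commutator_mul (hp : IsIdempotentElem p)
    (hq : p * q + q * p = q) (c : 𝕜) :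
    (c • 1 + (q * p - p * q)) * p = c • p + q * p := by
  rw [add_mul, sub_mul, smul_one_mul, mul_assoc q p p, hp.eq,
    hp.mul_mul_eq_zero_of_mul_add_mul_eq hq, sub_zero]

theorem IsIdempotentElem.mul_smul_one_add_commutator (hp : IsIdempotentElem p)
    (hq : p * q + q * p = q) (c : 𝕜) :
    p * (c • 1 + (q * p - p * q)) = c • p - p * q := by
  rw [mul_add, mul_sub, mul_smul_one, ← mul_assoc p q p, hp.mul_mul_eq_zero_of_mul_add_mul_eq hq,
    ← mul_assoc p p q, hp.eq, zero_sub, ← sub_eq_add_neg]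

theorem IsIdempotentElem.smul_one_add_commutator_lie (hp : IsIdempotentElem p)
    (hq : p * q + q * p = q) (c : 𝕜) :
    (c • 1 + (q * p - p * q)) * p - p * (c • 1 + (q * p - p * q)) = q := by
  rw [hp.smul_one_add_commutator_mul hq, hp.mul_smul_one_add_commutator hq, add_sub_sub_cancel,
    add_comm, hq]

end IdempotentAlgebra

theorem HasDerivWithinAt.mul_add_mul_eq_of_isIdempotentElem {𝕜 R : Type*}
    [NontriviallyNormedField 𝕜] [NormedRing R] [NormedAlgebra 𝕜 R] {P : 𝕜 → R} {P' : R} {s : Set 𝕜} {t : 𝕜}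
    (hP : HasDerivWithinAt P P' s t) (hs : UniqueDiffWithinAt 𝕜 s t) (ht : t ∈ s)
    (hidem : ∀ r ∈ s, IsIdempotentElem (P r)) :
    P t * P' + P' * P t = P' := by
  have hPP : HasDerivWithinAt (fun r => P r * P r) (P' * P t + P t * P') s t := hP.mul hP
  rw [add_comm]
  exact hs.eq_deriv _ (hPP.congr (fun r hr => (hidem r hr).symm) (hidem t ht).symm) hP

theorem eqOn_Icc_of_hasDerivWithinAt_mul_left {R : Type*} [NormedRing R] [NormedAlgebra ℝ R]
    {A X Y : ℝ → R} {a b : ℝ} (hA : ContinuousOn A (Icc a b))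
    (hX : ∀ t ∈ Icc a b, HasDerivWithinAt X (A t * X t) (Icc a b) t)
    (hY : ∀ t ∈ Icc a b, HasDerivWithinAt Y (A t * Y t) (Icc a b) t) (hXY : X a = Y a) :
    EqOn X Y (Icc a b) := by
  obtain ⟨C, hC⟩ := isCompact_Icc.exists_bound_of_continuousOn hA
  have hLip : ∀ t ∈ Ico a b, LipschitzOnWith (Real.toNNReal C) (A t * ·) univ := fun t ht =>
    ((lipschitzWith_smul (A t)).weaken (by
      rw [← NNReal.coe_le_coe, coe_nnnorm]
      exact (hC t (Ico_subset_Icc_self ht)).trans (Real.le_coe_toNNReal C))).lipschitzOnWith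
  have hright {Z : ℝ → R} (hZ : ∀ t ∈ Icc a b, HasDerivWithinAt Z (A t * Z t) (Icc a b) t) :
      ∀ t ∈ Ico a b, HasDerivWithinAt Z (A t * Z t) (Ici t) t := fun t ht =>
    (hZ t (Ico_subset_Icc_self ht)).mono_of_mem_nhdsWithin (Icc_mem_nhdsGE_of_mem ht)
  have hcont {Z : ℝ → R} (hZ : ∀ t ∈ Icc a b, HasDerivWithinAt Z (A t * Z t) (Icc a b) t) :
      ContinuousOn Z (Icc a b) := fun t ht => (hZ t ht).continuousWithinAt
  exact ODE_solution_unique_of_mem_Icc_right hLip (hcont hX) (hright hX) (fun _ _ => trivial)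
    (hcont hY) (hright hY) (fun _ _ => trivial) hXY

theorem eqOn_mul_of_hasDerivWithinAt_commutator {R : Type*} [NormedRing R] [NormedAlgebra ℝ R]
    {A U P : ℝ → R} {a b : ℝ} (hA : ContinuousOn A (Icc a b))
    (hU : ∀ t ∈ Icc a b, HasDerivWithinAt U (A t * U t) (Icc a b) t) (hU₀ : U a = 1)
    (hP : ∀ t ∈ Icc a b, HasDerivWithinAt P (A t * P t - P t * A t) (Icc a b) t) :
    EqOn (fun t => U t * P a) (fun t => P t * U t) (Icc a b) := by
  refine eqOn_Icc_of_hasDerivWithinAt_mul_left hA (fun t ht => ?_) (fun t ht => ?_)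
    (by simp only [hU₀, one_mul, mul_one])
  · simpa only [mul_assoc] using (hU t ht).mul_const (P a)
  · convert (hP t ht).fun_mul (hU t ht) using 1
    noncomm_ring

theorem HasDerivWithinAt.star_mul_of_eq_mul_left {R : Type*} [NormedRing R] [NormedAlgebra ℝ R]
    [StarRing R] [StarModule ℝ R] [ContinuousStar R] {U V : ℝ → R} {B A : R} {s : Set ℝ} {t : ℝ}
    (hU : HasDerivWithinAt U (B * U t) s t) (hV : HasDerivWithinAt V (A * V t) s t) :
    HasDerivWithinAt (fun r => star (U r) * V r) (star (U t) * ((star B + A) * V t)) s t := by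
  convert hU.star.fun_mul hV using 1
  rw [star_mul, add_mul, mul_add, mul_assoc]

theorem stmt9_general
    {H : Type*} [NormedAddCommGroup H] [InnerProductSpace ℂ H] [FiniteDimensional ℂ H]
    (τ : ℝ) (hτ : 0 < τ)
    (Ham : ℝ → H →L[ℂ] H)
    (hHamSA : ∀ s ∈ Icc (0:ℝ) 1, IsSelfAdjoint (Ham s))
    (P P' : ℝ → H →L[ℂ] H)
    (hPD : ∀ s ∈ Icc (0:ℝ) 1, HasDerivWithinAt P (P' s) (Icc 0 1) s)
    (hPC : ContinuousOn P' (Icc 0 1))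
    (hPproj : ∀ s ∈ Icc (0:ℝ) 1, (P s).comp (P s) = P s)
    (lam : ℝ → ℝ) (hlam : ContinuousOn lam (Icc 0 1))
    (heig : ∀ s ∈ Icc (0:ℝ) 1, (Ham s).comp (P s) = (lam s : ℂ) • P s)
    (UA : ℝ → H →L[ℂ] H) (hUA0 : UA 0 = 1)
    (hUAD : ∀ s ∈ Icc (0:ℝ) 1,
      HasDerivWithinAt UA
        ((-Complex.I * (τ : ℂ)) •
          (((lam s : ℂ) • (1 : H →L[ℂ] H)
            + (Complex.I / (τ : ℂ)) • commutatorCLM (P' s) (P s)).comp (UA s)))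
        (Icc 0 1) s)
    (Utau : ℝ → H →L[ℂ] H)
    (hUtauD : ∀ s ∈ Icc (0:ℝ) 1,
      HasDerivWithinAt Utau ((-Complex.I * (τ : ℂ)) • ((Ham s).comp (Utau s)))
        (Icc 0 1) s) :
    ∀ s ∈ Icc (0:ℝ) 1, ∃ Ω' : H →L[ℂ] H,
      HasDerivWithinAt (fun r => (ContinuousLinearMap.adjoint (Utau r)).comp (UA r))
        Ω' (Icc 0 1) s ∧
      Ω'.comp (P 0) =
        (ContinuousLinearMap.adjoint (Utau s)).comp ((P' s).comp ((UA s).comp (P 0))) := by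
  set A : ℝ → H →L[ℂ] H := fun t =>
    (-Complex.I * τ * lam t) • 1 + (P' t * P t - P t * P' t)
  have hidem : ∀ t ∈ Icc (0:ℝ) 1, IsIdempotentElem (P t) := hPproj
  have hPP' : ∀ t ∈ Icc (0:ℝ) 1, P t * P' t + P' t * P t = P' t := fun t ht =>
    (hPD t ht).mul_add_mul_eq_of_isIdempotentElem (uniqueDiffOn_Icc_zero_one t ht) ht hidem
  have hUA' : ∀ t ∈ Icc (0:ℝ) 1, HasDerivWithinAt UA (A t * UA t) (Icc 0 1) t := fun t ht => by
    simpa only [← mul_def, ← smul_mul_assoc,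
      smul_smul_one_add_smul_commutatorCLM (Complex.ofReal_ne_zero.2 hτ.ne')] using hUAD t ht
  have hAcont : ContinuousOn A (Icc 0 1) := by
    have hPc : ContinuousOn P (Icc 0 1) := fun t ht => (hPD t ht).continuousWithinAt
    fun_prop
  have hcomm : ∀ t ∈ Icc (0:ℝ) 1, UA t * P 0 = P t * UA t :=
    eqOn_mul_of_hasDerivWithinAt_commutator hAcont hUA' hUA0 fun t ht => by
      rw [(hidem t ht).smul_one_add_commutator_lie (hPP' t ht)]
      exact hPD t ht
  intro s hs
  refine ⟨star (Utau s) * ((star ((-Complex.I * τ) • Ham s) + A s) * UA s), ?_, ?_⟩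
  · simp only [← star_eq_adjoint, ← mul_def, ← smul_mul_assoc] at hUtauD ⊢
    exact (hUtauD s hs).star_mul_of_eq_mul_left (hUA' s hs)
  · have hHP : Ham s * P s = (lam s : ℂ) • P s := heig s hs
    have hAP : A s * P s = (-Complex.I * τ * lam s) • P s + P' s * P s :=
      (hidem s hs).smul_one_add_commutator_mul (hPP' s hs) _
    have hgen : (star ((-Complex.I * τ) • Ham s) + A s) * P s = P' s * P s := by
      rw [add_mul, star_smul, (hHamSA s hs).star_eq, smul_mul_assoc, hHP, hAP, smul_smul,
        ← add_assoc, ← add_smul]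
      simp
    simp only [← star_eq_adjoint, ← mul_def, mul_assoc, hcomm s hs]
    rw [← mul_assoc _ (P s), hgen, mul_assoc]

/-- with `Ω(s) = U_τ(s)* U_A(s)`, the derivative of `Ω` satisfies
`Ω̇(s) P(0) = U_τ(s)* Ṗ(s) U_A(s) P(0)` for all `s ∈ [0,1]`. -/
theorem stmt9
    {H : Type*} [NormedAddCommGroup H] [InnerProductSpace ℂ H] [FiniteDimensional ℂ H]
    (τ : ℝ) (hτ : 0 < τ)
    (Ham Ham' Ham'' : ℝ → H →L[ℂ] H)
    (hHamSA : ∀ s ∈ Icc (0:ℝ) 1, IsSelfAdjoint (Ham s))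
    (hHamD : ∀ s ∈ Icc (0:ℝ) 1, HasDerivWithinAt Ham (Ham' s) (Icc 0 1) s)
    (hHamD2 : ∀ s ∈ Icc (0:ℝ) 1, HasDerivWithinAt Ham' (Ham'' s) (Icc 0 1) s)
    (hHamC2 : ContinuousOn Ham'' (Icc 0 1))
    (P P' : ℝ → H →L[ℂ] H)
    (hPD : ∀ s ∈ Icc (0:ℝ) 1, HasDerivWithinAt P (P' s) (Icc 0 1) s)
    (hPC : ContinuousOn P' (Icc 0 1))
    (hPproj : ∀ s ∈ Icc (0:ℝ) 1, (P s).comp (P s) = P s)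
    (hPsa : ∀ s ∈ Icc (0:ℝ) 1, IsSelfAdjoint (P s))
    (hPrank : ∀ s ∈ Icc (0:ℝ) 1, Module.finrank ℂ (LinearMap.range (P s).toLinearMap) = 1)
    (lam : ℝ → ℝ) (hlam : ContinuousOn lam (Icc 0 1))
    (heig : ∀ s ∈ Icc (0:ℝ) 1, (Ham s).comp (P s) = (lam s : ℂ) • P s)
    (UA : ℝ → H →L[ℂ] H) (hUA0 : UA 0 = 1)
    (hUAD : ∀ s ∈ Icc (0:ℝ) 1,
      HasDerivWithinAt UA
        ((-Complex.I * (τ : ℂ)) •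
          (((lam s : ℂ) • (1 : H →L[ℂ] H)
            + (Complex.I / (τ : ℂ)) • commutatorCLM (P' s) (P s)).comp (UA s)))
        (Icc 0 1) s)
    (Utau : ℝ → H →L[ℂ] H) (hUtau0 : Utau 0 = 1)
    (hUtauD : ∀ s ∈ Icc (0:ℝ) 1,
      HasDerivWithinAt Utau ((-Complex.I * (τ : ℂ)) • ((Ham s).comp (Utau s)))
        (Icc 0 1) s) :
    ∀ s ∈ Icc (0:ℝ) 1, ∃ Ω' : H →L[ℂ] H,
      HasDerivWithinAt (fun r => (ContinuousLinearMap.adjoint (Utau r)).comp (UA r))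
        Ω' (Icc 0 1) s ∧
      Ω'.comp (P 0) =
        (ContinuousLinearMap.adjoint (Utau s)).comp ((P' s).comp ((UA s).comp (P 0))) :=
  stmt9_general τ hτ Ham hHamSA P P' hPD hPC hPproj lam hlam heig UA hUA0 hUAD Utau hUtauD
end
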